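/- arXiv:0909.3220 — 2 statements merged into one kernel-verified Lean document; each statement's English description precedes it below -/
import Mathlib

section
/- Let X : U → ℝ^{n×m} be continuous on a domain U ⊆ ℝ^m × ℝ^n, let F = (F_1,…,F_n) : U → ℝ^n be C¹ with each component F_i a first integral of the total differential system (TD) on U and with the partial Jacobian matrix ∂_x F(t,x) invertible at every (t,x) ∈ U, and let S : U → ℝ^n be a differentiable map with (t, S(t,x)) ∈ U and F(t, S(t,x)) = x for all (t,x) ∈ U. Then ∂_{t_j} S(t,x) = X^j(t, S(t,x)) for all (t,x) ∈ U and all j = 1,…,m, where X^j = (X_{1j},…,X_{nj}) is the j-th column of X; that is, for each fixed x the map t ↦ S(t,x) is a solution of (TD). -/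
open Filter Topology

/-! Differentiating `F (t, S (t, x)) = x` in the direction `(e_j, 0)` shows that `(e_j, ∂_{t_j} S)`
lies in the kernel of `F'(t, S(t,x))`; so does `(e_j, X^j)`, since the `F_i` are first integrals.
The two vectors differ by `(0, ∂_{t_j} S - X^j)`, and `∂_x F` is injective, so they coincide. -/

section

variable {𝕜 : Type*} [NontriviallyNormedField 𝕜]
  {E G H : Type*} [NormedAddCommGroup E] [NormedSpace 𝕜 E] [NormedAddCommGroup G] [NormedSpace 𝕜 G]
  [NormedAddCommGroup H] [NormedSpace 𝕜 H]

theorem fderiv_apply_fderiv_eq_zero_of_eventually_eq_snd {F : E × G → H} {S : E × H → G}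
    {p : E × H} (hF : DifferentiableAt 𝕜 F (p.1, S p)) (hS : DifferentiableAt 𝕜 S p)
    (hFS : ∀ᶠ r in 𝓝 p, F (r.1, S r) = r.2) (v : E) :
    fderiv 𝕜 F (p.1, S p) (v, fderiv 𝕜 S p (v, 0)) = 0 := by
  have hcomp : HasFDerivAt (fun r : E × H => F (r.1, S r))
      ((fderiv 𝕜 F (p.1, S p)).comp ((ContinuousLinearMap.fst 𝕜 E H).prod (fderiv 𝕜 S p))) p :=
    hF.hasFDerivAt.comp p (hasFDerivAt_fst.prodMk hS.hasFDerivAt)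
  have hsnd : HasFDerivAt (fun r : E × H => F (r.1, S r)) (ContinuousLinearMap.snd 𝕜 E H) p :=
    hasFDerivAt_snd.congr_of_eventuallyEq hFS
  simpa using congrArg (· (v, 0)) (hcomp.unique hsnd)

theorem ContinuousLinearMap.eq_of_apply_eq_zero_of_injective_inr (L : E × G →L[𝕜] H)
    (hL : Function.Injective fun w : G => L (0, w)) {v : E} {a b : G}
    (ha : L (v, a) = 0) (hb : L (v, b) = 0) : a = b := by
  have hdiff : L (0, a - b) = L (0, 0) := by
    rw [show ((0 : E), a - b) = (v, a) - (v, b) by simp, map_sub, ha, hb, sub_zero,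
      Prod.mk_zero_zero, map_zero]
  exact sub_eq_zero.mp (hL hdiff)

end

theorem inverse_of_firstIntegrals_is_solution_general
    {m n : ℕ}
    (U : Set ((Fin m → ℝ) × (Fin n → ℝ)))
    (hUopen : IsOpen U)
    (X : ((Fin m → ℝ) × (Fin n → ℝ)) → Fin n → Fin m → ℝ)
    (F : ((Fin m → ℝ) × (Fin n → ℝ)) → Fin n → ℝ)
    (hF : ContDiffOn ℝ 1 F U)
    (hFint : ∀ p ∈ U, ∀ (i : Fin n) (j : Fin m),
      fderiv ℝ (fun q => F q i) p ((Pi.single j 1 : Fin m → ℝ), fun i' => X p i' j) = 0)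
    (hFinv : ∀ p ∈ U, Function.Bijective (fun v : Fin n → ℝ => fderiv ℝ F p (0, v)))
    (S : ((Fin m → ℝ) × (Fin n → ℝ)) → Fin n → ℝ)
    (hSdiff : ∀ p ∈ U, DifferentiableAt ℝ S p)
    (hSin : ∀ p ∈ U, (p.1, S p) ∈ U)
    (hFS : ∀ p ∈ U, F (p.1, S p) = p.2) :
    ∀ p ∈ U, ∀ j : Fin m,
      fderiv ℝ S p ((Pi.single j 1 : Fin m → ℝ), 0)
        = fun i => X (p.1, S p) i j := by
  intro p hp j
  have hq : (p.1, S p) ∈ U := hSin p hp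
  have hFq : DifferentiableAt ℝ F (p.1, S p) :=
    (hF.contDiffAt (hUopen.mem_nhds hq)).differentiableAt one_ne_zero
  have hS_tangent := fderiv_apply_fderiv_eq_zero_of_eventually_eq_snd hFq (hSdiff p hp)
    (eventually_of_mem (hUopen.mem_nhds hp) hFS) (Pi.single j 1)
  have hX_tangent : fderiv ℝ F (p.1, S p) (Pi.single j 1, fun i => X (p.1, S p) i j) = 0 := by
    funext i
    simpa [fderiv_apply hFq] using hFint _ hq i j
  exact (fderiv ℝ F (p.1, S p)).eq_of_apply_eq_zero_of_injective_inr (hFinv _ hq).injective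
    hS_tangent hX_tangent

/-- Let `X : U → ℝ^{n×m}` be continuous on a domain `U ⊆ ℝᵐ × ℝⁿ`, let
`F = (F₁,…,F_n) : U → ℝⁿ` be `C¹` with every component a first integral of (TD) on `U` and
with partial Jacobian `∂_x F(t,x)` invertible at every point of `U`, and let `S : U → ℝⁿ` be
differentiable with `(t, S(t,x)) ∈ U` and `F(t, S(t,x)) = x` on `U`. Then
`∂_{t_j} S(t,x) = X^j(t, S(t,x))` on `U` for every `j`; that is, for each fixed `x` the map
`t ↦ S(t,x)` is a solution of (TD). -/
theorem inverse_of_firstIntegrals_is_solution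
    {m n : ℕ}
    (U : Set ((Fin m → ℝ) × (Fin n → ℝ)))
    (hUopen : IsOpen U) (hUconn : IsConnected U)
    (X : ((Fin m → ℝ) × (Fin n → ℝ)) → Fin n → Fin m → ℝ)
    (hX : ContinuousOn X U)
    (F : ((Fin m → ℝ) × (Fin n → ℝ)) → Fin n → ℝ)
    (hF : ContDiffOn ℝ 1 F U)
    (hFint : ∀ p ∈ U, ∀ (i : Fin n) (j : Fin m),
      fderiv ℝ (fun q => F q i) p ((Pi.single j 1 : Fin m → ℝ), fun i' => X p i' j) = 0)
    (hFinv : ∀ p ∈ U, Function.Bijective (fun v : Fin n → ℝ => fderiv ℝ F p (0, v)))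
    (S : ((Fin m → ℝ) × (Fin n → ℝ)) → Fin n → ℝ)
    (hSdiff : ∀ p ∈ U, DifferentiableAt ℝ S p)
    (hSin : ∀ p ∈ U, (p.1, S p) ∈ U)
    (hFS : ∀ p ∈ U, F (p.1, S p) = p.2) :
    ∀ p ∈ U, ∀ j : Fin m,
      fderiv ℝ S p ((Pi.single j 1 : Fin m → ℝ), 0)
        = fun i => X (p.1, S p) i j :=
  inverse_of_firstIntegrals_is_solution_general U hUopen X F hF hFint hFinv S hSdiff hSin hFS
end

section
/- Let X : U → ℝ^{n×m} be continuous on a product domain U = T × V, where T ⊆ ℝ^m is a connected domain and V ⊆ ℝ^n is a domain. Let F = (F_1,…,F_n) : U → ℝ^n be C¹ with each component F_i a first integral of the total differential system (TD) on U, with the partial Jacobian matrix ∂_x F(t,x) invertible at every (t,x) ∈ U, and with F(t,x) ∈ V for all (t,x) ∈ U. Let S : U → ℝ^n be a differentiable map with (t, S(t,x)) ∈ U, F(t, S(t,x)) = x, and S(t, F(t,x)) = x for all (t,x) ∈ U. Then every first integral Ψ ∈ C¹(U) of (TD) on U factors through F: for any fixed t₀ ∈ T, one has Ψ(t,x) =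 Φ(F(t,x)) for all (t,x) ∈ U, where Φ : V → ℝ is the function Φ(x) = Ψ(t₀, S(t₀,x)). -/
/-!
Differentiating `F (t, S (t, x)) = x` in `t` and using that the components of `F` are first
integrals, the invertibility of `∂ₓF` forces `∂ₜ S (t, x) = X (t, S (t, x))`: the curves
`t ↦ (t, S (t, y))` are integral manifolds of (TD). A first integral `Ψ` is therefore constant
along each of them, and connectedness of `T` gives `Ψ (t, S (t, y)) = Ψ (t₀, S (t₀, y))`.
Substituting `y = F (t, x)` and `S (t, F (t, x)) = x` yields the factorisation.
-/

open Filter Topology ContinuousLinearMap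

section

variable {E H K : Type*} [NormedAddCommGroup E] [NormedSpace ℝ E]
  [NormedAddCommGroup H] [NormedSpace ℝ H] [NormedAddCommGroup K] [NormedSpace ℝ K]

theorem fderiv_rightInverse_apply_inl {F S : E × H → H} {p : E × H}
    (hF : DifferentiableAt ℝ F (p.1, S p)) (hS : DifferentiableAt ℝ S p)
    (hFS : (fun r => F (r.1, S r)) =ᶠ[𝓝 p] Prod.snd)
    (hinj : Function.Injective fun v => fderiv ℝ F (p.1, S p) (0, v))
    {e : E} {ξ : H} (he : fderiv ℝ F (p.1, S p) (e, ξ) = 0) :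
    fderiv ℝ S p (e, 0) = ξ := by
  set L := fderiv ℝ F (p.1, S p)
  have hchain : L.comp ((fst ℝ E H).prod (fderiv ℝ S p)) = snd ℝ E H :=
    ((hF.hasFDerivAt.comp p (hasFDerivAt_fst.prodMk hS.hasFDerivAt)).congr_of_eventuallyEq
      hFS.symm).unique hasFDerivAt_snd
  have hS_dir : L (e, fderiv ℝ S p (e, 0)) = 0 := by
    simpa using congr($hchain (e, 0))
  apply hinj
  change L (0, _) = L (0, ξ)
  rw [← sub_eq_zero, ← map_sub,
    show ((0 : E), fderiv ℝ S p (e, 0)) - (0, ξ) = (e, fderiv ℝ S p (e, 0)) - (e, ξ) by simp,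
    map_sub, hS_dir, he, sub_zero]

theorem hasFDerivAt_comp_mk_section {Ψ : E × H → K} {S : E × H → H} {t : E} {y : H}
    (hΨ : DifferentiableAt ℝ Ψ (t, S (t, y))) (hS : DifferentiableAt ℝ S (t, y)) :
    HasFDerivAt (fun s => Ψ (s, S (s, y)))
      ((fderiv ℝ Ψ (t, S (t, y))).comp
        ((ContinuousLinearMap.id ℝ E).prod ((fderiv ℝ S (t, y)).comp (inl ℝ E H)))) t :=
  hΨ.hasFDerivAt.comp t
    ((hasFDerivAt_id t).prodMk (hS.hasFDerivAt.comp t (hasFDerivAt_prodMk_left t y)))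

theorem hasFDerivAt_comp_mk_section_eq_zero {m : ℕ} {F S : (Fin m → ℝ) × H → H}
    {Ψ : (Fin m → ℝ) × H → K} {t : Fin m → ℝ} {y : H} (ξ : Fin m → H)
    (hF : DifferentiableAt ℝ F (t, S (t, y))) (hΨ : DifferentiableAt ℝ Ψ (t, S (t, y)))
    (hS : DifferentiableAt ℝ S (t, y))
    (hFS : (fun r => F (r.1, S r)) =ᶠ[𝓝 (t, y)] Prod.snd)
    (hinj : Function.Injective fun v => fderiv ℝ F (t, S (t, y)) (0, v))
    (hFξ : ∀ j, fderiv ℝ F (t, S (t, y)) (Pi.single j 1, ξ j) = 0)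
    (hΨξ : ∀ j, fderiv ℝ Ψ (t, S (t, y)) (Pi.single j 1, ξ j) = 0) :
    HasFDerivAt (fun s => Ψ (s, S (s, y))) (0 : (Fin m → ℝ) →L[ℝ] K) t := by
  refine (hasFDerivAt_comp_mk_section hΨ hS).congr_fderiv (coe_injective ?_)
  refine (Pi.basisFun ℝ (Fin m)).ext fun j => ?_
  have hS_dir := fderiv_rightInverse_apply_inl hF hS hFS hinj (hFξ j)
  simp [hS_dir, hΨξ j]

end

theorem firstIntegral_factors_through_basis_general
    {m n : ℕ}
    (T : Set (Fin m → ℝ)) (V : Set (Fin n → ℝ))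
    (hTopen : IsOpen T) (hTconn : IsConnected T)
    (hVopen : IsOpen V)
    (X : ((Fin m → ℝ) × (Fin n → ℝ)) → Fin n → Fin m → ℝ)
    (F : ((Fin m → ℝ) × (Fin n → ℝ)) → Fin n → ℝ)
    (hF : ContDiffOn ℝ 1 F (T ×ˢ V))
    (hFint : ∀ p ∈ T ×ˢ V, ∀ (i : Fin n) (j : Fin m),
      fderiv ℝ (fun q => F q i) p ((Pi.single j 1 : Fin m → ℝ), fun i' => X p i' j) = 0)
    (hFinv : ∀ p ∈ T ×ˢ V, Function.Bijective (fun v : Fin n → ℝ => fderiv ℝ F p (0, v)))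
    (hFin : ∀ p ∈ T ×ˢ V, F p ∈ V)
    (S : ((Fin m → ℝ) × (Fin n → ℝ)) → Fin n → ℝ)
    (hSdiff : ∀ p ∈ T ×ˢ V, DifferentiableAt ℝ S p)
    (hSin : ∀ p ∈ T ×ˢ V, (p.1, S p) ∈ T ×ˢ V)
    (hFS : ∀ p ∈ T ×ˢ V, F (p.1, S p) = p.2)
    (hSF : ∀ p ∈ T ×ˢ V, S (p.1, F p) = p.2)
    (Ψ : ((Fin m → ℝ) × (Fin n → ℝ)) → ℝ)
    (hΨ : ContDiffOn ℝ 1 Ψ (T ×ˢ V))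
    (hΨint : ∀ p ∈ T ×ˢ V, ∀ j : Fin m,
      fderiv ℝ Ψ p ((Pi.single j 1 : Fin m → ℝ), fun i => X p i j) = 0)
    (t₀ : Fin m → ℝ) (ht₀ : t₀ ∈ T) :
    ∀ p ∈ T ×ˢ V, Ψ p = (fun x => Ψ (t₀, S (t₀, x))) (F p) := by
  have hU : IsOpen (T ×ˢ V) := hTopen.prod hVopen
  have hFd : ∀ p ∈ T ×ˢ V, DifferentiableAt ℝ F p := fun p hp =>
    (hF.contDiffAt (hU.mem_nhds hp)).differentiableAt one_ne_zero
  have hΨd : ∀ p ∈ T ×ˢ V, DifferentiableAt ℝ Ψ p := fun p hp =>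
    (hΨ.contDiffAt (hU.mem_nhds hp)).differentiableAt one_ne_zero
  have hFint_vec : ∀ p ∈ T ×ˢ V, ∀ j : Fin m,
      fderiv ℝ F p ((Pi.single j 1 : Fin m → ℝ), fun i => X p i j) = 0 := fun p hp j =>
    funext fun i => by simpa [fderiv_apply (hFd p hp)] using hFint p hp i j
  have hconst : ∀ y ∈ V, ∀ t ∈ T, Ψ (t, S (t, y)) = Ψ (t₀, S (t₀, y)) := by
    intro y hy
    have hderiv : ∀ t ∈ T, HasFDerivAt (fun s => Ψ (s, S (s, y))) 0 t := fun t ht =>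
      have hq := hSin (t, y) ⟨ht, hy⟩
      hasFDerivAt_comp_mk_section_eq_zero _ (hFd _ hq) (hΨd _ hq) (hSdiff _ ⟨ht, hy⟩)
        (eventually_of_mem (hU.mem_nhds ⟨ht, hy⟩) hFS) (hFinv _ hq).injective
        (hFint_vec _ hq) (hΨint _ hq)
    exact fun t ht => hTopen.is_const_of_fderiv_eq_zero hTconn.isPreconnected
      (fun s hs => (hderiv s hs).differentiableAt.differentiableWithinAt)
      (fun s hs => (hderiv s hs).fderiv) ht ht₀
  intro p hp
  simpa [hSF p hp] using hconst (F p) (hFin p hp) p.1 hp.1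

/-- Lemma 1.3. Let `X` be continuous on a product domain `U = T ×ˢ V`,
`T ⊆ ℝᵐ` connected, `V ⊆ ℝⁿ`. Let `F : U → ℝⁿ` be `C¹` with every component a first integral
of (TD) on `U`, with `∂_x F(t,x)` invertible everywhere and `F(t,x) ∈ V` on `U`, and let
`S : U → ℝⁿ` be differentiable with `(t, S(t,x)) ∈ U`, `F(t, S(t,x)) = x`, and
`S(t, F(t,x)) = x` on `U`. Then every first integral `Ψ ∈ C¹(U)` of (TD) on `U` factors
through `F`: for any fixed `t₀ ∈ T`, `Ψ(t,x) = Φ(F(t,x))` on `U` where `Φ(x) = Ψ(t₀, S(t₀,x))`. -/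
theorem firstIntegral_factors_through_basis
    {m n : ℕ}
    (T : Set (Fin m → ℝ)) (V : Set (Fin n → ℝ))
    (hTopen : IsOpen T) (hTconn : IsConnected T)
    (hVopen : IsOpen V) (hVconn : IsConnected V)
    (X : ((Fin m → ℝ) × (Fin n → ℝ)) → Fin n → Fin m → ℝ)
    (hX : ContinuousOn X (T ×ˢ V))
    (F : ((Fin m → ℝ) × (Fin n → ℝ)) → Fin n → ℝ)
    (hF : ContDiffOn ℝ 1 F (T ×ˢ V))
    (hFint : ∀ p ∈ T ×ˢ V, ∀ (i : Fin n) (j : Fin m),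
      fderiv ℝ (fun q => F q i) p ((Pi.single j 1 : Fin m → ℝ), fun i' => X p i' j) = 0)
    (hFinv : ∀ p ∈ T ×ˢ V, Function.Bijective (fun v : Fin n → ℝ => fderiv ℝ F p (0, v)))
    (hFin : ∀ p ∈ T ×ˢ V, F p ∈ V)
    (S : ((Fin m → ℝ) × (Fin n → ℝ)) → Fin n → ℝ)
    (hSdiff : ∀ p ∈ T ×ˢ V, DifferentiableAt ℝ S p)
    (hSin : ∀ p ∈ T ×ˢ V, (p.1, S p) ∈ T ×ˢ V)
    (hFS : ∀ p ∈ T ×ˢ V, F (p.1, S p) = p.2)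
    (hSF : ∀ p ∈ T ×ˢ V, S (p.1, F p) = p.2)
    (Ψ : ((Fin m → ℝ) × (Fin n → ℝ)) → ℝ)
    (hΨ : ContDiffOn ℝ 1 Ψ (T ×ˢ V))
    (hΨint : ∀ p ∈ T ×ˢ V, ∀ j : Fin m,
      fderiv ℝ Ψ p ((Pi.single j 1 : Fin m → ℝ), fun i => X p i j) = 0)
    (t₀ : Fin m → ℝ) (ht₀ : t₀ ∈ T) :
    ∀ p ∈ T ×ˢ V, Ψ p = (fun x => Ψ (t₀, S (t₀, x))) (F p) :=
  firstIntegral_factors_through_basis_general T V hTopen hTconn hVopen X F hF hFint hFinv hFin S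
    hSdiff hSin hFS hSF Ψ hΨ hΨint t₀ ht₀
end
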